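/- arXiv:1708.00701 — 2 statements merged into one kernel-verified Lean document; each statement's English description precedes it below -/
import Mathlib

section
/- Let 0 ≤ θ ≤ 1, 0 ≤ ν < 1, and let Θ₁, Θ₂, Θ₃, T_δ be positive reals with T_tr = (Θ₁+Θ₂+Θ₃)/3. Then the sum over i = 1,2,3 of ln((1−θ)·((1−ν)·T_tr + ν·Θᵢ) + θ·T_δ) is at least 3(1−θ)(1−ν)·ln(T_tr) + (1−θ)·ν·ln(Θ₁Θ₂Θ₃) + 3θ·ln(T_δ). -/
/-!
Each eigenvalue of the corrected temperature tensor is a convex combination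
`(1-θ)(1-ν) T_tr + (1-θ)ν Θᵢ + θ T_δ` of three positive temperatures, so concavity of the
logarithm bounds its logarithm below by the same combination of the three logarithms.
Summing over `i` and using `∑ log Θᵢ = log (Θ₁Θ₂Θ₃)` gives the bound.
-/

open Real

theorem Real.mul_log_add_mul_log_add_mul_log_le_log {w₁ w₂ w₃ p₁ p₂ p₃ : ℝ}
    (hw₁ : 0 ≤ w₁) (hw₂ : 0 ≤ w₂) (hw₃ : 0 ≤ w₃) (hp₁ : 0 < p₁) (hp₂ : 0 < p₂) (hp₃ : 0 < p₃)
    (hw : w₁ + w₂ + w₃ = 1) :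
    w₁ * log p₁ + w₂ * log p₂ + w₃ * log p₃ ≤ log (w₁ * p₁ + w₂ * p₂ + w₃ * p₃) := by
  have h := strictConcaveOn_log_Ioi.concaveOn.le_map_sum (t := Finset.univ)
    (w := ![w₁, w₂, w₃]) (p := ![p₁, p₂, p₃])
    (by simp [Fin.forall_fin_succ, hw₁, hw₂, hw₃]) (by simp [Fin.sum_univ_three, hw])
    (by simp [Fin.forall_fin_succ, hp₁, hp₂, hp₃])
  simpa [Fin.sum_univ_three] using h

theorem log_relaxed_temperature_ge {θ ν T Θ T_δ : ℝ} (hθ0 : 0 ≤ θ) (hθ1 : θ ≤ 1)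
    (hν0 : 0 ≤ ν) (hν1 : ν ≤ 1) (hT : 0 < T) (hΘ : 0 < Θ) (hδ : 0 < T_δ) :
    (1 - θ) * (1 - ν) * log T + (1 - θ) * ν * log Θ + θ * log T_δ ≤
      log ((1 - θ) * ((1 - ν) * T + ν * Θ) + θ * T_δ) := by
  have hθ' : 0 ≤ 1 - θ := by linarith
  have hν' : 0 ≤ 1 - ν := by linarith
  calc (1 - θ) * (1 - ν) * log T + (1 - θ) * ν * log Θ + θ * log T_δ
      ≤ log ((1 - θ) * (1 - ν) * T + (1 - θ) * ν * Θ + θ * T_δ) :=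
        mul_log_add_mul_log_add_mul_log_le_log (mul_nonneg hθ' hν') (mul_nonneg hθ' hν0) hθ0
          hT hΘ hδ (by ring)
    _ = log ((1 - θ) * ((1 - ν) * T + ν * Θ) + θ * T_δ) := by ring_nf

theorem log_det_lower_bound_pos_nu (θ ν T_δ : ℝ) (Θ : Fin 3 → ℝ)
    (hθ0 : 0 ≤ θ) (hθ1 : θ ≤ 1) (hν0 : 0 ≤ ν) (hν1 : ν < 1)
    (hΘ : ∀ i, 0 < Θ i) (hδ : 0 < T_δ)
    (T_tr : ℝ) (htr : T_tr = (Θ 0 + Θ 1 + Θ 2) / 3) :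
    ∑ i : Fin 3, Real.log ((1 - θ) * ((1 - ν) * T_tr + ν * Θ i) + θ * T_δ) ≥
      3 * (1 - θ) * (1 - ν) * Real.log T_tr
        + (1 - θ) * ν * Real.log (Θ 0 * Θ 1 * Θ 2) + 3 * θ * Real.log T_δ := by
  have hT : 0 < T_tr := by
    rw [htr]
    linarith [hΘ 0, hΘ 1, hΘ 2]
  have hi (i : Fin 3) := log_relaxed_temperature_ge hθ0 hθ1 hν0 hν1.le hT (hΘ i) hδ
  have hlog : log (Θ 0 * Θ 1 * Θ 2) = log (Θ 0) + log (Θ 1) + log (Θ 2) := by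
    rw [log_mul (mul_pos (hΘ 0) (hΘ 1)).ne' (hΘ 2).ne', log_mul (hΘ 0).ne' (hΘ 1).ne']
  rw [Fin.sum_univ_three, hlog]
  linarith [hi 0, hi 1, hi 2]
end

section
/- Let −1/2 < ν < 1, 0 ≤ θ ≤ 1, δ > 0, and let Θ₁, Θ₂, Θ₃, T_int be positive reals. Set T_tr = (Θ₁+Θ₂+Θ₃)/3, T_δ = (3·T_tr + δ·T_int)/(3+δ), and T_θ = θ·T_δ + (1−θ)·T_int. Then Σᵢ ln((1−θ)·((1−ν)·T_tr + ν·Θᵢ) + θ·T_δ) + δ·ln(T_θ) − (3+δ)·ln(T_δ) ≥ (1−θ)·(ln(Θ₁Θ₂Θ₃) + δ·ln(T_int) − (3+δ)·ln(T_δ)). -/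
/-!
The vector `a i = (1 - ν) T_tr + ν Θ i` is the image of `Θ` under a doubly stochastic matrix
(its entries are nonnegative exactly when `-1/2 ≤ ν ≤ 1`), so concavity of `log` gives
`∑ log a i ≥ log (Θ 0 Θ 1 Θ 2)`. Concavity of `log` along the `θ`-segments gives
`log ((1 - θ) a i + θ T_δ) ≥ (1 - θ) log a i + θ log T_δ` and
`log T_θ ≥ θ log T_δ + (1 - θ) log T_int`; adding the first three and `δ` times the last,
the terms `θ log T_δ` add up to exactly `θ (3 + δ) log T_δ`.
-/

open Finset Matrix Real

lemma mul_log_add_mul_log_le_log {a b x y : ℝ} (ha : 0 ≤ a) (hb : 0 ≤ b) (hab : a + b = 1)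
    (hx : 0 < x) (hy : 0 < y) : a * log x + b * log y ≤ log (a * x + b * y) :=
  strictConcaveOn_log_Ioi.concaveOn.2 hx hy ha hb hab

section DoublyStochastic

variable {n : Type*} [Fintype n] [DecidableEq n] {M : Matrix n n ℝ} {x : n → ℝ}

lemma mulVec_apply_mem_of_mem_rowStochastic {s : Set ℝ} (hs : Convex ℝ s)
    (hM : M ∈ rowStochastic ℝ n) (hx : ∀ j, x j ∈ s) (i : n) : (M *ᵥ x) i ∈ s :=
  hs.sum_mem (fun j _ => hM.1 i j) (sum_row_of_mem_rowStochastic hM i) fun j _ => hx j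

/-- Jensen's inequality applied row by row; the column sums then redistribute the weights. -/
theorem ConcaveOn.sum_le_sum_mulVec {s : Set ℝ} {f : ℝ → ℝ} (hf : ConcaveOn ℝ s f)
    (hM : M ∈ doublyStochastic ℝ n) (hx : ∀ j, x j ∈ s) :
    ∑ j, f (x j) ≤ ∑ i, f ((M *ᵥ x) i) :=
  calc ∑ j, f (x j) = ∑ j, (∑ i, M i j) * f (x j) := by
        simp [sum_col_of_mem_doublyStochastic hM]
    _ = ∑ i, ∑ j, M i j • f (x j) := by rw [sum_comm]; simp [sum_mul]
    _ ≤ ∑ i, f ((M *ᵥ x) i) := sum_le_sum fun i _ =>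
        hf.le_map_sum (fun j _ => hM.1 i j) (sum_row_of_mem_doublyStochastic hM i) fun j _ => hx j

variable (n) in
/-- The matrix of `x ↦ (1 - ν) • mean x + ν • x`. -/
noncomputable def shrinkToMean (ν : ℝ) : Matrix n n ℝ :=
  of fun i j => (1 - ν) / Fintype.card n + if i = j then ν else 0

lemma shrinkToMean_mulVec_apply (ν : ℝ) (i : n) :
    (shrinkToMean n ν *ᵥ x) i = (1 - ν) * ((∑ j, x j) / Fintype.card n) + ν * x i := by
  simp only [mulVec, dotProduct, shrinkToMean, of_apply, add_mul, ite_mul, zero_mul,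
    sum_add_distrib, ← mul_sum, sum_ite_eq, mem_univ, ↓reduceIte]
  ring

lemma shrinkToMean_mem_doublyStochastic {ν : ℝ} (hν₀ : 0 ≤ 1 + (Fintype.card n - 1) * ν)
    (hν₁ : ν ≤ 1) : shrinkToMean n ν ∈ doublyStochastic ℝ n := by
  have hcard (i : n) : (0 : ℝ) < Fintype.card n := by
    exact_mod_cast Fintype.card_pos_iff.2 ⟨i⟩
  rw [mem_doublyStochastic_iff_sum]
  refine ⟨fun i j => ?_, fun i => ?_, fun j => ?_⟩
  · simp only [shrinkToMean, of_apply]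
    split_ifs
    · have := hcard i
      calc (0 : ℝ) ≤ (1 + (Fintype.card n - 1) * ν) / Fintype.card n := by positivity
        _ = _ := by field_simp; ring
    · exact add_nonneg (div_nonneg (by linarith) (hcard i).le) le_rfl
  · have := hcard i
    simp only [shrinkToMean, of_apply, sum_add_distrib, sum_const, card_univ, nsmul_eq_mul,
      sum_ite_eq, mem_univ, ↓reduceIte]
    field_simp; ring
  · have := hcard j
    simp only [shrinkToMean, of_apply, sum_add_distrib, sum_const, card_univ, nsmul_eq_mul,
      sum_ite_eq', mem_univ, ↓reduceIte]
    field_simp; ring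

end DoublyStochastic

theorem entropy_comparison_lemma (θ ν δ T_int : ℝ) (Θ : Fin 3 → ℝ)
    (hν0 : -1/2 < ν) (hν1 : ν < 1) (hθ0 : 0 ≤ θ) (hθ1 : θ ≤ 1) (hδ : 0 < δ)
    (hΘ : ∀ i, 0 < Θ i) (hint : 0 < T_int)
    (T_tr T_δ T_θ : ℝ)
    (htr : T_tr = (Θ 0 + Θ 1 + Θ 2) / 3)
    (hTδ : T_δ = (3 * T_tr + δ * T_int) / (3 + δ))
    (hTθ : T_θ = θ * T_δ + (1 - θ) * T_int) :
    ∑ i : Fin 3, Real.log ((1 - θ) * ((1 - ν) * T_tr + ν * Θ i) + θ * T_δ)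
      + δ * Real.log T_θ - (3 + δ) * Real.log T_δ ≥
    (1 - θ) * (Real.log (Θ 0 * Θ 1 * Θ 2) + δ * Real.log T_int
      - (3 + δ) * Real.log T_δ) := by
  have hM : shrinkToMean (Fin 3) ν ∈ doublyStochastic ℝ (Fin 3) :=
    shrinkToMean_mem_doublyStochastic (by norm_num; linarith) hν1.le
  set a := shrinkToMean (Fin 3) ν *ᵥ Θ
  have ha : ∀ i, (1 - ν) * T_tr + ν * Θ i = a i := fun i => by
    simp only [a, shrinkToMean_mulVec_apply, htr, Fin.sum_univ_three]; norm_num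
  have ha_pos : ∀ i, 0 < a i := mulVec_apply_mem_of_mem_rowStochastic (convex_Ioi 0)
    (mem_doublyStochastic_iff_mem_rowStochastic_and_mem_colStochastic.1 hM).1 hΘ
  have hlog_a : log (Θ 0 * Θ 1 * Θ 2) ≤ ∑ i, log (a i) := by
    rw [← Fin.prod_univ_three, log_prod fun i _ => (hΘ i).ne']
    exact strictConcaveOn_log_Ioi.concaveOn.sum_le_sum_mulVec hM hΘ
  have hTδ_pos : 0 < T_δ := by
    have := hΘ 0; have := hΘ 1; have := hΘ 2
    rw [hTδ, htr]; positivity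
  have hmix : (1 - θ) * ∑ i, log (a i) + 3 * (θ * log T_δ) ≤
      ∑ i, log ((1 - θ) * a i + θ * T_δ) :=
    calc _ = ∑ i : Fin 3, ((1 - θ) * log (a i) + θ * log T_δ) := by
          simp [sum_add_distrib, mul_sum]
      _ ≤ _ := sum_le_sum fun i _ =>
          mul_log_add_mul_log_le_log (by linarith) hθ0 (by ring) (ha_pos i) hTδ_pos
  have hlog_Tθ : θ * log T_δ + (1 - θ) * log T_int ≤ log T_θ :=
    hTθ ▸ mul_log_add_mul_log_le_log hθ0 (by linarith) (by ring) hTδ_pos hint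
  simp_rw [ha]
  linarith [mul_le_mul_of_nonneg_left hlog_a (sub_nonneg.2 hθ1),
    mul_le_mul_of_nonneg_left hlog_Tθ hδ.le]
end
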